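/- Let n, d, k be positive integers and let F be a k×k symmetric-matrix-valued homogeneous polynomial of degree 2n in d variables with entrywise spherical-harmonic decomposition F = F_0 + F_2 + … + F_{2n} (i.e. each entry of F_{2j} is homogeneous harmonic of degree 2j and F(x) = Σ_{j=0}^n ‖x‖^{2(n−j)} F_{2j}(x)). Let B > 0 be a constant such that for every real homogeneous polynomial f of degree 2n in d variables with spherical-harmonic decomposition f_0, …, f_{2n}, one has sup_{x∈S^{d−1}} |f_{2j}(x)| ≤ B·sup_{x∈S^{d−1}} |f(x)| for all j. Then for every j, sup_{x∈S^{d−1}} ‖F_{2j}(x)‖ ≤ B·sup_{x∈S^{d−1}} ‖F(x)‖, where ‖·‖ denotes the spectral (operator) norm of a symmetric matrix. -/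

import Mathlib

open Matrix

/-- The Laplacian `Δ = ∑ i, ∂²/∂x_i²` of a polynomial. -/
noncomputable def polyLap {d : ℕ} (f : MvPolynomial (Fin d) ℝ) : MvPolynomial (Fin d) ℝ :=
  ∑ i : Fin d, MvPolynomial.pderiv i (MvPolynomial.pderiv i f)

/-- Spherical-harmonic decomposition of a scalar homogeneous polynomial of degree `2n`. -/
def IsSHDecomp (d n : ℕ) (f : MvPolynomial (Fin d) ℝ)
    (g : ℕ → MvPolynomial (Fin d) ℝ) : Prop :=
  (∀ k, k ≤ n → (g k).IsHomogeneous (2 * k) ∧ polyLap (g k) = 0) ∧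
  ∀ x : Fin d → ℝ,
    MvPolynomial.eval x f
      = ∑ k ∈ Finset.range (n + 1), (∑ i, x i ^ 2) ^ (n - k) * MvPolynomial.eval x (g k)

/-- The spectral (operator) norm of a real square matrix, i.e. the operator norm of the
induced linear map between Euclidean spaces. -/
noncomputable def specNorm {k : ℕ} (A : Matrix (Fin k) (Fin k) ℝ) : ℝ :=
  ‖LinearMap.toContinuousLinearMap (Matrix.toEuclideanLin A)‖

lemma polyLap_smul {d : ℕ} (c : ℝ) (p : MvPolynomial (Fin d) ℝ) :
    polyLap (c • p) = c • polyLap p := by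
  simp [polyLap, Finset.smul_sum]

lemma polyLap_sum {d : ℕ} {ι : Type*} (s : Finset ι) (p : ι → MvPolynomial (Fin d) ℝ) :
    polyLap (∑ i ∈ s, p i) = ∑ i ∈ s, polyLap (p i) := by
  simp only [polyLap, map_sum]
  rw [Finset.sum_comm]

/-- The bilinear form of `toEuclideanLin`. -/
lemma inner_toEuclideanLin {k : ℕ} (A : Matrix (Fin k) (Fin k) ℝ)
    (u v : EuclideanSpace ℝ (Fin k)) :
    inner ℝ u (LinearMap.toContinuousLinearMap (Matrix.toEuclideanLin A) v)
      = ∑ a, ∑ b, (u a * v b) * A a b := by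
  simp only [LinearMap.coe_toContinuousLinearMap', Matrix.toEuclideanLin_apply,
    PiLp.inner_apply, RCLike.inner_apply, conj_trivial]
  refine Finset.sum_congr rfl fun a _ => ?_
  simp only [Matrix.mulVec, dotProduct,
    Finset.mul_sum, Finset.sum_mul]
  refine Finset.sum_congr rfl fun b _ => ?_
  ring

lemma abs_bilin_le_specNorm {k : ℕ} (A : Matrix (Fin k) (Fin k) ℝ)
    (u v : EuclideanSpace ℝ (Fin k)) (hu : ‖u‖ = 1) (hv : ‖v‖ = 1) :
    |∑ a, ∑ b, (u a * v b) * A a b| ≤ specNorm A := by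
  rw [← inner_toEuclideanLin]
  calc |inner ℝ u (LinearMap.toContinuousLinearMap (Matrix.toEuclideanLin A) v)|
      ≤ ‖u‖ * ‖LinearMap.toContinuousLinearMap (Matrix.toEuclideanLin A) v‖ :=
        abs_real_inner_le_norm _ _
    _ ≤ ‖u‖ * (specNorm A * ‖v‖) := by
        gcongr
        exact (LinearMap.toContinuousLinearMap (Matrix.toEuclideanLin A)).le_opNorm v
    _ = specNorm A := by rw [hu, hv]; ring

lemma specNorm_le_of_bilin {k : ℕ} (A : Matrix (Fin k) (Fin k) ℝ) (c : ℝ) (hc : 0 ≤ c)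
    (h : ∀ u v : EuclideanSpace ℝ (Fin k), ‖u‖ = 1 → ‖v‖ = 1 →
      |∑ a, ∑ b, (u a * v b) * A a b| ≤ c) :
    specNorm A ≤ c := by
  set L := LinearMap.toContinuousLinearMap (Matrix.toEuclideanLin A) with hL
  have key : ∀ u v : EuclideanSpace ℝ (Fin k), |(inner ℝ u (L v) : ℝ)| ≤ c * ‖u‖ * ‖v‖ := by
    intro u v
    rcases eq_or_ne u 0 with rfl | hu
    · simp [hc]
    rcases eq_or_ne v 0 with rfl | hv
    · simp [hc]
    have hnu : ‖u‖ ≠ 0 := norm_ne_zero_iff.mpr hu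
    have hnv : ‖v‖ ≠ 0 := norm_ne_zero_iff.mpr hv
    have h1 : ‖(‖u‖⁻¹ • u : EuclideanSpace ℝ (Fin k))‖ = 1 := by
      rw [norm_smul, norm_inv, norm_norm, inv_mul_cancel₀ hnu]
    have h2 : ‖(‖v‖⁻¹ • v : EuclideanSpace ℝ (Fin k))‖ = 1 := by
      rw [norm_smul, norm_inv, norm_norm, inv_mul_cancel₀ hnv]
    have := h _ _ h1 h2
    rw [← inner_toEuclideanLin, ← hL] at this
    rw [_root_.map_smul, real_inner_smul_left, real_inner_smul_right] at this
    rw [abs_mul, abs_mul, abs_inv, abs_inv, abs_norm, abs_norm] at this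
    have h3 : |(inner ℝ u (L v) : ℝ)| = ‖u‖ * ‖v‖ * (‖u‖⁻¹ * (‖v‖⁻¹ * |(inner ℝ u (L v) : ℝ)|)) := by
      field_simp
    rw [h3]
    calc ‖u‖ * ‖v‖ * (‖u‖⁻¹ * (‖v‖⁻¹ * |(inner ℝ u (L v) : ℝ)|)) ≤ ‖u‖ * ‖v‖ * c := by
          apply mul_le_mul_of_nonneg_left this (by positivity)
      _ = c * ‖u‖ * ‖v‖ := by ring
  apply ContinuousLinearMap.opNorm_le_bound _ hc
  intro v
  rcases eq_or_ne (L v) 0 with h0 | h0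
  · rw [h0, norm_zero]; positivity
  have := key (L v) v
  rw [real_inner_self_eq_norm_sq] at this
  have hLv : 0 < ‖L v‖ := norm_pos_iff.mpr h0
  have : ‖L v‖ ^ 2 ≤ c * ‖L v‖ * ‖v‖ := le_trans (le_abs_self _) this
  nlinarith

/-- the scalar bound `B` for spherical-harmonic components transfers verbatim to
symmetric matrix-valued polynomials, with the sup of the spectral norm in place of the sup of
the absolute value. -/
theorem stmt_6 (n d k : ℕ) (hn : 0 < n) (hd : 0 < d) (hk : 0 < k)
    (F : Matrix (Fin k) (Fin k) (MvPolynomial (Fin d) ℝ))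
    (hFhom : ∀ a b, (F a b).IsHomogeneous (2 * n)) (hFsym : Fᵀ = F)
    (G : ℕ → Matrix (Fin k) (Fin k) (MvPolynomial (Fin d) ℝ))
    (hGharm : ∀ j, j ≤ n → ∀ a b,
      ((G j) a b).IsHomogeneous (2 * j) ∧ polyLap ((G j) a b) = 0)
    (hGdecomp : ∀ x : Fin d → ℝ,
      F.map (MvPolynomial.eval x)
        = ∑ j ∈ Finset.range (n + 1),
            ((∑ i, x i ^ 2) ^ (n - j)) • (G j).map (MvPolynomial.eval x))
    (B : ℝ) (hB : 0 < B)
    (hBbound : ∀ (f : MvPolynomial (Fin d) ℝ) (g : ℕ → MvPolynomial (Fin d) ℝ),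
      f.IsHomogeneous (2 * n) → IsSHDecomp d n f g →
      ∀ M : ℝ, (∀ x : Fin d → ℝ, (∑ i, x i ^ 2) = 1 → |MvPolynomial.eval x f| ≤ M) →
        ∀ j, j ≤ n → ∀ x : Fin d → ℝ, (∑ i, x i ^ 2) = 1 →
          |MvPolynomial.eval x (g j)| ≤ B * M) :
    ∀ j, j ≤ n →
      ∀ M : ℝ, (∀ x : Fin d → ℝ, (∑ i, x i ^ 2) = 1 →
          specNorm (F.map (MvPolynomial.eval x)) ≤ M) →
        ∀ x : Fin d → ℝ, (∑ i, x i ^ 2) = 1 →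
          specNorm ((G j).map (MvPolynomial.eval x)) ≤ B * M := by
  intro j hj M hM x hx
  -- M is nonnegative
  have hM0 : 0 ≤ M := le_trans (norm_nonneg _) (hM x hx)
  apply specNorm_le_of_bilin _ _ (by positivity)
  intro u v hu hv
  -- scalar polynomial f = uᵀ F v and its decomposition
  set f : MvPolynomial (Fin d) ℝ := ∑ a, ∑ b, (u a * v b) • F a b with hf
  set g : ℕ → MvPolynomial (Fin d) ℝ := fun j => ∑ a, ∑ b, (u a * v b) • G j a b with hg
  have smul_eq : ∀ (c : ℝ) (p : MvPolynomial (Fin d) ℝ), c • p = MvPolynomial.C c * p :=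
    fun c p => (MvPolynomial.smul_eq_C_mul p c)
  have hfhom : f.IsHomogeneous (2 * n) := by
    apply MvPolynomial.IsHomogeneous.sum
    intro a _
    apply MvPolynomial.IsHomogeneous.sum
    intro b _
    rw [smul_eq]
    exact (hFhom a b).C_mul _
  have hevalg : ∀ j (y : Fin d → ℝ),
      MvPolynomial.eval y (g j) = ∑ a, ∑ b, (u a * v b) * MvPolynomial.eval y (G j a b) := by
    intro j y
    simp [hg, smul_eq]
  have hevalf : ∀ y : Fin d → ℝ,
      MvPolynomial.eval y f = ∑ a, ∑ b, (u a * v b) * MvPolynomial.eval y (F a b) := by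
    intro y
    simp [hf, smul_eq]
  have hdecomp : IsSHDecomp d n f g := by
    constructor
    · intro j hj
      constructor
      · apply MvPolynomial.IsHomogeneous.sum
        intro a _
        apply MvPolynomial.IsHomogeneous.sum
        intro b _
        rw [smul_eq]
        exact ((hGharm j hj a b).1).C_mul _
      · rw [hg]
        simp only [polyLap_sum, polyLap_smul]
        simp [(hGharm j hj _ _).2]
    · intro y
      have hentry : ∀ a b, MvPolynomial.eval y (F a b)
          = ∑ j ∈ Finset.range (n + 1), (∑ i, y i ^ 2) ^ (n - j)
              * MvPolynomial.eval y (G j a b) := by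
        intro a b
        have := congrFun (congrFun (hGdecomp y) a) b
        simpa [Matrix.map_apply, Matrix.sum_apply, Matrix.smul_apply, smul_eq_mul] using this
      have swap1 : ∀ (h : Fin k → Fin k → ℕ → ℝ),
          ∑ a, ∑ b, ∑ jz ∈ Finset.range (n + 1), h a b jz
            = ∑ jz ∈ Finset.range (n + 1), ∑ a, ∑ b, h a b jz := by
        intro h
        have hin : ∀ a : Fin k, ∑ b, ∑ jz ∈ Finset.range (n + 1), h a b jz
            = ∑ jz ∈ Finset.range (n + 1), ∑ b, h a b jz := fun a => Finset.sum_comm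
        simp only [hin]
        exact Finset.sum_comm
      rw [hevalf]
      simp only [hentry, Finset.mul_sum, hevalg]
      rw [swap1]
      refine Finset.sum_congr rfl fun jz _ => Finset.sum_congr rfl fun a _ =>
        Finset.sum_congr rfl fun b _ => by ring
  have hMf : ∀ y : Fin d → ℝ, (∑ i, y i ^ 2) = 1 → |MvPolynomial.eval y f| ≤ M := by
    intro y hy
    rw [hevalf]
    have h1 := abs_bilin_le_specNorm (F.map (MvPolynomial.eval y)) u v hu hv
    have h2 := hM y hy
    simp only [Matrix.map_apply] at h1
    exact le_trans h1 h2
  have hfinal := hBbound f g hfhom hdecomp M hMf j hj x hx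
  rw [hevalg] at hfinal
  simpa only [Matrix.map_apply] using hfinal
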